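/- For a ∈ (0,1/2), the critical pinning parameter λ_c(a), defined as the unique λ > 2 with log(λ/(2√(λ-1))) = a log(λ-1), satisfies λ_c(a) > 2/(1-2a). -/

import Mathlib

noncomputable def freeEn (l : ℝ) : ℝ := Real.log (l / (2 * Real.sqrt (l - 1)))

lemma key_ineq (lc : ℝ) (hlc : 2 < lc) :
    lc * Real.log lc - lc * Real.log 2 < (lc - 1) * Real.log (lc - 1) := by
  set g : ℝ → ℝ := fun t => (t - 1) * Real.log (t - 1) - t * Real.log t + t * Real.log 2 with hg
  have hmono : StrictMonoOn g (Set.Ici (2 : ℝ)) := by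
    apply strictMonoOn_of_deriv_pos (convex_Ici 2)
    · intro x hx
      have hx2 : (2:ℝ) ≤ x := hx
      have h1 : x - 1 ≠ 0 := by linarith
      have h2 : x ≠ 0 := by linarith
      have c1 : ContinuousAt (fun t : ℝ => Real.log (t - 1)) x :=
        (continuousAt_id.sub continuousAt_const).log h1
      have c2 : ContinuousAt Real.log x := Real.continuousAt_log h2
      exact ((((continuousAt_id.sub continuousAt_const).mul c1).sub
        (continuousAt_id.mul c2)).add (continuousAt_id.mul continuousAt_const)).continuousWithinAt
    · intro x hx
      rw [interior_Ici] at hx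
      have hx2 : (2:ℝ) < x := hx
      have h1 : x - 1 ≠ 0 := by linarith
      have h2 : x ≠ 0 := by linarith
      have hd1 : HasDerivAt (fun t : ℝ => t - 1) 1 x := (hasDerivAt_id x).sub_const 1
      have hdl1 : HasDerivAt (fun t : ℝ => Real.log (t - 1)) ((x - 1)⁻¹ * 1) x :=
        by have := (Real.hasDerivAt_log h1).comp x hd1; exact this
      have hdl2 : HasDerivAt Real.log x⁻¹ x := Real.hasDerivAt_log h2
      have hdg : HasDerivAt g (Real.log (x - 1) - Real.log x + Real.log 2) x := by
        have := ((hd1.mul hdl1).sub ((hasDerivAt_id x).mul hdl2)).add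
          ((hasDerivAt_id x).mul_const (Real.log 2))
        refine this.congr_deriv ?_
        simp only [id, mul_one, one_mul, mul_inv_cancel₀ h1, mul_inv_cancel₀ h2]
        ring
      rw [hdg.deriv]
      have hlt : Real.log x < Real.log (x - 1) + Real.log 2 := by
        rw [← Real.log_mul h1 (by norm_num)]
        exact Real.log_lt_log (by linarith) (by nlinarith)
      linarith
  have h2mem : (2:ℝ) ∈ Set.Ici (2:ℝ) := Set.self_mem_Ici
  have hlcmem : lc ∈ Set.Ici (2:ℝ) := le_of_lt hlc
  have := hmono h2mem hlcmem hlc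
  have hg2 : g 2 = 0 := by norm_num [hg]
  rw [hg2] at this
  simp only [hg] at this
  linarith

/-- For `a ∈ (0,1/2)`, the critical pinning parameter `λ_c(a)`, i.e. any `λ > 2`
satisfying `log(λ/(2√(λ-1))) = a log(λ-1)`, satisfies `λ_c(a) > 2/(1-2a)`. -/
theorem critical_point_gt (a lc : ℝ) (ha : a ∈ Set.Ioo (0 : ℝ) (1 / 2))
    (hlc : 2 < lc) (heq : freeEn lc = a * Real.log (lc - 1)) :
    2 / (1 - 2 * a) < lc := by
  obtain ⟨ha0, ha2⟩ := ha
  have h1a : 0 < 1 - 2 * a := by linarith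
  have hl1 : (1:ℝ) < lc - 1 := by linarith
  have hL : 0 < Real.log (lc - 1) := Real.log_pos hl1
  have hlc0 : (0:ℝ) < lc := by linarith
  have hs : Real.sqrt (lc - 1) ≠ 0 := by positivity
  have hE : Real.log lc - Real.log 2 = (a + 1/2) * Real.log (lc - 1) := by
    have : freeEn lc = Real.log lc - (Real.log 2 + (1/2) * Real.log (lc - 1)) := by
      rw [freeEn, Real.log_div (by linarith) (by positivity), Real.log_mul (by norm_num) hs,
        Real.log_sqrt (by linarith)]
      ring
    rw [this] at heq
    linarith
  have hkey := key_ineq lc hlc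
  -- from hE: lc*(log lc - log 2) = lc*(a+1/2)*L < (lc-1)*L, so lc*(a+1/2) < lc-1
  have h3 : lc * (a + 1/2) * Real.log (lc - 1) < (lc - 1) * Real.log (lc - 1) := by
    calc lc * (a + 1/2) * Real.log (lc - 1) = lc * (Real.log lc - Real.log 2) := by
          rw [hE]; ring
      _ < (lc - 1) * Real.log (lc - 1) := by linarith
  have h4 : lc * (a + 1/2) < lc - 1 := lt_of_mul_lt_mul_right (by linarith [h3]) hL.le
  rw [div_lt_iff₀ h1a]
  nlinarith
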